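/- arXiv:1105.1567 — 2 statements merged into one kernel-verified Lean document; each statement's English description precedes it below -/
import Mathlib

section
/- The Kronecker product G₁ × G₂ of two connected nontrivial graphs is connected if and only if G₁ or G₂ contains an odd cycle. -/
open SimpleGraph

/-- The Kronecker (tensor) product of two simple graphs. -/
def tensorProd {α β : Type*} (G : SimpleGraph α) (H : SimpleGraph β) : SimpleGraph (α × β) where
  Adj p q := G.Adj p.1 q.1 ∧ H.Adj p.2 q.2
  symm := ⟨fun p q h => ⟨G.adj_symm h.1, H.adj_symm h.2⟩⟩
  loopless := ⟨fun p h => G.loopless.irrefl p.1 h.1⟩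

instance {α β : Type*} (G : SimpleGraph α) (H : SimpleGraph β)
    [DecidableRel G.Adj] [DecidableRel H.Adj] : DecidableRel (tensorProd G H).Adj :=
  fun _ _ => instDecidableAnd

/-- `S` is a separating set of `G`: deleting `S` leaves a single vertex or a
disconnected (possibly empty) graph. -/
def IsSeparating {V : Type*} (G : SimpleGraph V) (S : Set V) : Prop :=
  Sᶜ.ncard = 1 ∨ ¬ (G.induce Sᶜ).Connected

/-- The vertex connectivity `κ(G)`: the minimum cardinality of a separating set. -/
noncomputable def kappa {V : Type*} [Fintype V] (G : SimpleGraph V) : ℕ :=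
  sInf {k | ∃ S : Set V, IsSeparating G S ∧ S.ncard = k}

/-- A graph is super-connected (super-κ) if every minimum separating set is the
neighborhood of some vertex. -/
def SuperK {V : Type*} [Fintype V] (G : SimpleGraph V) : Prop :=
  ∀ S : Set V, IsSeparating G S → S.ncard = kappa G → ∃ v, S = G.neighborSet v

/-!
A walk in `G₁ × G₂` is a pair of walks of the same length in the factors, and a walk ending
at a non-isolated vertex can be lengthened by any even number by going back and forth along
an edge. So in the product of connected graphs without isolated vertices, `(a, b)` reaches
`(a', b')` as soon as some walk `a → a'` and some walk `b → b'` have the same parity. An odd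
closed walk in one factor lets us flip the parity of walks there, which gives connectedness.
Conversely, for 2-colorings `c₁`, `c₂` of the factors, `c₁ a + c₂ b` (mod 2) is invariant along
the edges of the product, but differs at `(u, b)` and `(v, b)` for an edge `uv` of `G₁`.
-/

namespace SimpleGraph

variable {α β : Type*} {G : SimpleGraph α} {H : SimpleGraph β}

lemma Connected.exists_adj_of_edgeSet_nonempty (hG : G.Connected) (he : G.edgeSet.Nonempty)
    (a : α) : ∃ c, G.Adj a c := by
  obtain ⟨⟨u, v⟩, huv⟩ := he
  have : Nontrivial α := ⟨⟨u, v, G.ne_of_adj huv⟩⟩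
  exact hG.preconnected.exists_adj_of_nontrivial a

lemma Walk.exists_length_eq_add_two_mul {a a' c : α} (w : G.Walk a a') (h : G.Adj a' c) (k : ℕ) :
    ∃ w' : G.Walk a a', w'.length = w.length + 2 * k := by
  induction k with
  | zero => exact ⟨w, rfl⟩
  | succ k ih =>
    obtain ⟨w', hw'⟩ := ih
    refine ⟨w'.append (Walk.cons h (Walk.cons h.symm Walk.nil)), ?_⟩
    simp only [Walk.length_append, Walk.length_cons, Walk.length_nil, hw']
    ring

lemma Connected.exists_walk_length_mod_two (hG : G.Connected) (hnc : ¬ G.Colorable 2)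
    (u v : α) (n : ℕ) : ∃ w : G.Walk u v, w.length % 2 = n % 2 := by
  obtain ⟨x, loop, hodd⟩ : ∃ x, ∃ loop : G.Walk x x, Odd loop.length := by
    simpa [two_colorable_iff_forall_loop_even, ← Nat.not_odd_iff_even] using hnc
  obtain ⟨w⟩ := hG u v
  obtain ⟨t⟩ := hG v x
  by_cases hw : w.length % 2 = n % 2
  · exact ⟨w, hw⟩
  · refine ⟨w.append (t.append (loop.append t.reverse)), ?_⟩
    rw [Nat.odd_iff] at hodd
    simp only [Walk.length_append, Walk.length_reverse]
    omega

lemma tensorProd_reachable_of_length_eq {a a' : α} {b b' : β} (w₁ : G.Walk a a')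
    (w₂ : H.Walk b b') (h : w₁.length = w₂.length) :
    (tensorProd G H).Reachable (a, b) (a', b') := by
  induction w₁ generalizing b with
  | nil =>
    obtain rfl : b = b' := Walk.eq_of_length_eq_zero h.symm
    rfl
  | cons hadj _ ih =>
    cases w₂ with
    | nil => simp at h
    | cons hadj' q =>
      exact (Adj.reachable (show (tensorProd G H).Adj _ _ from ⟨hadj, hadj'⟩)).trans
        (ih q (by simpa using h))

lemma tensorProd_reachable_of_length_mod_two_eq {a a' c : α} {b b' d : β}
    (w₁ : G.Walk a a') (w₂ : H.Walk b b') (hc : G.Adj a' c) (hd : H.Adj b' d)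
    (h : w₁.length % 2 = w₂.length % 2) :
    (tensorProd G H).Reachable (a, b) (a', b') := by
  rcases le_total w₁.length w₂.length with hle | hle
  · obtain ⟨w, hw⟩ := w₁.exists_length_eq_add_two_mul hc ((w₂.length - w₁.length) / 2)
    exact tensorProd_reachable_of_length_eq w w₂ (by omega)
  · obtain ⟨w, hw⟩ := w₂.exists_length_eq_add_two_mul hd ((w₁.length - w₂.length) / 2)
    exact tensorProd_reachable_of_length_eq w₁ w (by omega)

lemma tensorProd_connected_of_not_colorable_left (hG : G.Connected) (hH : H.Connected)
    (heG : G.edgeSet.Nonempty) (heH : H.edgeSet.Nonempty) (hnc : ¬ G.Colorable 2) :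
    (tensorProd G H).Connected := by
  have : Nonempty α := hG.nonempty
  have : Nonempty β := hH.nonempty
  refine (connected_iff _).2 ⟨?_, inferInstance⟩
  rintro ⟨a, b⟩ ⟨a', b'⟩
  obtain ⟨w₂⟩ := hH b b'
  obtain ⟨w₁, hw₁⟩ := hG.exists_walk_length_mod_two hnc a a' w₂.length
  obtain ⟨c, hc⟩ := hG.exists_adj_of_edgeSet_nonempty heG a'
  obtain ⟨d, hd⟩ := hH.exists_adj_of_edgeSet_nonempty heH b'
  exact tensorProd_reachable_of_length_mod_two_eq w₁ w₂ hc hd hw₁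

def tensorProdComm (G : SimpleGraph α) (H : SimpleGraph β) : tensorProd G H ≃g tensorProd H G :=
  { Equiv.prodComm α β with map_rel_iff' := and_comm }

lemma Coloring.add_eq_of_tensorProd_reachable (c₁ : G.Coloring (Fin 2)) (c₂ : H.Coloring (Fin 2))
    {p q : α × β} (h : (tensorProd G H).Reachable p q) :
    c₁ p.1 + c₂ p.2 = c₁ q.1 + c₂ q.2 := by
  have flip_both : ∀ x y z w : Fin 2, x ≠ y → z ≠ w → x + z = y + w := by decide
  obtain ⟨w⟩ := h
  induction w with
  | nil => rfl
  | cons hadj _ ih => exact (flip_both _ _ _ _ (c₁.valid hadj.1) (c₂.valid hadj.2)).trans ih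

lemma tensorProd_not_connected_of_colorable [Nonempty β] (he : G.edgeSet.Nonempty)
    (hG : G.Colorable 2) (hH : H.Colorable 2) : ¬ (tensorProd G H).Connected := by
  intro hconn
  obtain ⟨c₁⟩ := hG
  obtain ⟨c₂⟩ := hH
  obtain ⟨⟨u, v⟩, huv⟩ := he
  obtain ⟨b⟩ := ‹Nonempty β›
  have := c₁.add_eq_of_tensorProd_reachable c₂ (hconn.preconnected (u, b) (v, b))
  exact c₁.valid huv (add_right_cancel this)

end SimpleGraph

theorem stmt6_general {α β : Type*}
    (G₁ : SimpleGraph α) (G₂ : SimpleGraph β)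
    (h₁ : G₁.Connected) (h₂ : G₂.Connected)
    (he₁ : G₁.edgeSet.Nonempty) (he₂ : G₂.edgeSet.Nonempty) :
    (tensorProd G₁ G₂).Connected ↔ (¬ G₁.Colorable 2 ∨ ¬ G₂.Colorable 2) := by
  have : Nonempty β := h₂.nonempty
  constructor
  · intro hconn
    by_contra! hcol
    exact tensorProd_not_connected_of_colorable he₁ hcol.1 hcol.2 hconn
  · rintro (hodd₁ | hodd₂)
    · exact tensorProd_connected_of_not_colorable_left h₁ h₂ he₁ he₂ hodd₁
    · exact (tensorProdComm G₂ G₁).connected_iff.1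
        (tensorProd_connected_of_not_colorable_left h₂ h₁ he₂ he₁ hodd₂)

theorem stmt6 {α β : Type*} [Fintype α] [Fintype β]
    (G₁ : SimpleGraph α) (G₂ : SimpleGraph β)
    (h₁ : G₁.Connected) (h₂ : G₂.Connected)
    (he₁ : G₁.edgeSet.Nonempty) (he₂ : G₂.edgeSet.Nonempty) :
    (tensorProd G₁ G₂).Connected ↔ (¬ G₁.Colorable 2 ∨ ¬ G₂.Colorable 2) :=
  stmt6_general G₁ G₂ h₁ h₂ he₁ he₂
end

section
/- Let G be a connected nonbipartite graph with κ(G) = δ(G) ≥ 1, n ≥ 3, and S ⊆ V(G × Kₙ) with |S| = (n−1)δ(G), such that every fiber S_i = {u_i} × V(Kₙ) satisfies S_i' := S_i − S ≠ ∅ and G × Kₙ − S has no isolated vertex. Then each set S_i' is contained in the vertex set of a single connected component of G × Kₙ − S. -/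
/-!
Suppose the fiber over `u` meets two components `C ≠ C'` of `G × Kₙ - S`, at `(u, v)` and
`(u, v')`. Call `w` split if `(w, v)` and `(w, v')` lie in `C` and `C'`, in either order. The two
copies of a split vertex `w` have a common neighbour `(w', x)` for every neighbour `w'` of `w` and
every `x ≠ v, v'`, so all these lie in `S`; since no vertex of `G × Kₙ - S` is isolated, the same
holds for the fiber of `w` itself. Hence `S` meets the fiber of each split vertex in at least
`n - 2` points and the fiber of each vertex of the outer boundary `N` of the split set in at least
`n - 1` points. As the split set and `N` contain `u` and its neighbourhood, counting
`|S| = (n - 1)δ` gives `|N| < δ = κ`, so `G - N` is connected and every vertex is split or in `N`.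
The two kinds of split vertices are independent sets and no vertex of `N` sees both kinds, so a
degree count forces `N = ∅`, and then the two kinds 2-colour `G`.
-/

open SimpleGraph

open Finset

theorem connected_induce_compl_of_ncard_lt_kappa {α : Type*} [Fintype α] {G : SimpleGraph α}
    {N : Set α} (hN : N.ncard < kappa G) : (G.induce Nᶜ).Connected := by
  by_contra hc
  exact (Nat.sInf_le ⟨N, Or.inr hc, rfl⟩ : kappa G ≤ N.ncard).not_gt hN

section Product

variable {α β : Type*} [Fintype β]

theorem ncard_eq_sum_ncard_fiber [Fintype α] (S : Set (α × β)) :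
    S.ncard = ∑ a, {b | (a, b) ∈ S}.ncard := by
  classical
  simp only [Set.ncard_eq_toFinset_card', Set.toFinset_card]
  rw [← Fintype.card_sigma]
  exact Fintype.card_congr
    { toFun p := ⟨p.1.1, p.1.2, p.2⟩
      invFun q := ⟨(q.1, q.2.1), q.2.2⟩
      left_inv _ := rfl
      right_inv _ := rfl }

theorem card_sub_card_le_ncard_fiber {S : Set (α × β)} {a : α} (T : Finset β)
    (hT : ∀ b ∉ T, (a, b) ∈ S) :
    Fintype.card β - #T ≤ {b | (a, b) ∈ S}.ncard := by
  classical
  rw [← card_compl, ← Set.ncard_coe_finset]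
  exact Set.ncard_le_ncard fun b hb => hT b (by simpa using hb)

theorem mul_card_add_mul_card_le_ncard [Fintype α] {S : Set (α × β)} {A B : Finset α}
    (hAB : Disjoint A B) {k l : ℕ}
    (hA : ∀ a ∈ A, k ≤ {b | (a, b) ∈ S}.ncard) (hB : ∀ a ∈ B, l ≤ {b | (a, b) ∈ S}.ncard) :
    k * #A + l * #B ≤ S.ncard := by
  classical
  rw [ncard_eq_sum_ncard_fiber]
  calc k * #A + l * #B = ∑ _a ∈ A, k + ∑ _a ∈ B, l := by simp [mul_comm]
    _ ≤ ∑ a ∈ A, {b | (a, b) ∈ S}.ncard + ∑ a ∈ B, {b | (a, b) ∈ S}.ncard :=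
      add_le_add (sum_le_sum hA) (sum_le_sum hB)
    _ = ∑ a ∈ A ∪ B, {b | (a, b) ∈ S}.ncard := (sum_union hAB).symm
    _ ≤ ∑ a, {b | (a, b) ∈ S}.ncard := sum_le_sum_of_subset (subset_univ _)

end Product

namespace SimpleGraph

variable {α : Type*} {G : SimpleGraph α} [Fintype α] [DecidableEq α] [DecidableRel G.Adj]

theorem minDegree_le_card_add_card {v : α} {A B : Finset α}
    (h : ∀ w, G.Adj v w → w ∈ A ∨ w ∈ B) : G.minDegree ≤ #A + #B :=
  calc G.minDegree ≤ #(G.neighborFinset v) :=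
        G.card_neighborFinset_eq_degree v ▸ G.minDegree_le_degree v
    _ ≤ #(A ∪ B) := card_le_card fun w hw => mem_union.2 (h w ((G.mem_neighborFinset v w).1 hw))
    _ ≤ #A + #B := card_union_le A B

variable (G) in
def outerBoundary (W : Finset α) : Finset α :=
  univ.filter fun z => z ∉ W ∧ ∃ w ∈ W, G.Adj w z

theorem disjoint_outerBoundary (W : Finset α) : Disjoint W (G.outerBoundary W) :=
  Finset.disjoint_left.2 fun _ hw hz => (mem_filter.1 hz).2.1 hw

theorem minDegree_add_one_le_card_add_card_outerBoundary {W : Finset α} {u : α} (hu : u ∈ W) :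
    G.minDegree + 1 ≤ #W + #(G.outerBoundary W) := by
  have hdeg : G.minDegree ≤ #(W.erase u) + #(G.outerBoundary W) :=
    minDegree_le_card_add_card (v := u) fun w huw => by
      by_cases hw : w ∈ W
      · exact Or.inl (mem_erase.2 ⟨huw.ne', hw⟩)
      · exact Or.inr (mem_filter.2 ⟨mem_univ w, hw, u, hu, huw⟩)
  rw [card_erase_of_mem hu] at hdeg
  have := card_pos.2 ⟨u, hu⟩
  omega

theorem mem_or_mem_outerBoundary {W : Finset α} {u : α} (hu : u ∈ W)
    (hconn : (G.induce (G.outerBoundary W : Set α)ᶜ).Connected) (x : α) :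
    x ∈ W ∨ x ∈ G.outerBoundary W := by
  by_contra! hx
  have hu' : u ∉ G.outerBoundary W := Finset.disjoint_left.1 (disjoint_outerBoundary W) hu
  obtain ⟨d, -, hd, hd'⟩ := (hconn.preconnected ⟨u, hu'⟩ ⟨x, hx.2⟩).some.exists_boundary_dart
    {y | y.1 ∈ W} hu hx.1
  exact d.snd.2 (mem_filter.2 ⟨mem_univ _, hd', d.fst.1, hd, d.adj⟩)

theorem colorable_two_of_cover {P Q N : Finset α} (hcover : ∀ v, v ∈ P ∨ v ∈ Q ∨ v ∈ N)
    (hPQ : Disjoint P Q) (hP : G.IsIndepSet P) (hQ : G.IsIndepSet Q)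
    (hN : ∀ z ∈ N, ∀ p ∈ P, ∀ q ∈ Q, G.Adj z p → ¬ G.Adj z q)
    {p : α} (hp : p ∈ P) (hNδ : #N < G.minDegree)
    (hcard : #P + #Q + 2 * #N ≤ 2 * G.minDegree) : G.Colorable 2 := by
  have hdegP : G.minDegree ≤ #Q + #N := minDegree_le_card_add_card (v := p) fun w hpw =>
    (hcover w).resolve_left fun hw => hP hp hw hpw.ne hpw
  obtain ⟨q, hq⟩ : Q.Nonempty := card_pos.1 (by omega)
  have hdegQ : G.minDegree ≤ #P + #N := minDegree_le_card_add_card (v := q) fun w hqw => by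
    rcases hcover w with hw | hw | hw
    · exact Or.inl hw
    · exact (hQ hq hw hqw.ne hqw).elim
    · exact Or.inr hw
  obtain hN0 | ⟨z, hz⟩ := N.eq_empty_or_nonempty
  · refine IsBipartiteWith.isBipartite ⟨Finset.disjoint_coe.2 hPQ, fun v w hvw => ?_⟩
    have hcover' (x : α) : x ∈ P ∨ x ∈ Q := by simpa [hN0] using hcover x
    rcases hcover' v with hv | hv <;> rcases hcover' w with hw | hw
    · exact (hP hv hw hvw.ne hvw).elim
    · exact Or.inl ⟨hv, hw⟩
    · exact Or.inr ⟨hv, hw⟩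
    · exact (hQ hv hw hvw.ne hvw).elim
  · exfalso
    have hzN := card_erase_of_mem hz
    have hNpos := card_pos.2 ⟨z, hz⟩
    by_cases hzP : ∃ p ∈ P, G.Adj z p
    · obtain ⟨p', hp', hzp'⟩ := hzP
      have : G.minDegree ≤ #P + #(N.erase z) := minDegree_le_card_add_card fun w hzw => by
        rcases hcover w with hw | hw | hw
        · exact Or.inl hw
        · exact (hN z hz p' hp' w hw hzp' hzw).elim
        · exact Or.inr (mem_erase.2 ⟨hzw.ne', hw⟩)
      omega
    · have : G.minDegree ≤ #Q + #(N.erase z) := minDegree_le_card_add_card fun w hzw => by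
        rcases hcover w with hw | hw | hw
        · exact (hzP ⟨w, hw, hzw⟩).elim
        · exact Or.inl hw
        · exact Or.inr (mem_erase.2 ⟨hzw.ne', hw⟩)
      omega

end SimpleGraph

section Kronecker

variable {α : Type*} {G : SimpleGraph α} {n : ℕ} {S : Set (α × Fin n)}

open Classical in
variable (G S) in
/-- `none` on `S`, so that components of vertices can be compared without carrying proofs of
`p ∉ S`. -/
noncomputable def componentOf (p : α × Fin n) :
    Option ((tensorProd G (⊤ : SimpleGraph (Fin n))).induce Sᶜ).ConnectedComponent :=
  if h : p ∈ S then none else some (connectedComponentMk _ ⟨p, h⟩)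

theorem componentOf_of_notMem {p : α × Fin n} (h : p ∉ S) :
    componentOf G S p = some (connectedComponentMk _ ⟨p, h⟩) :=
  dif_neg h

theorem notMem_of_componentOf_eq_some {p : α × Fin n} {C} (h : componentOf G S p = some C) :
    p ∉ S := fun hp => by simp [componentOf, hp] at h

theorem componentOf_eq_of_adj {a b : α} {x y : Fin n} (hab : G.Adj a b) (hxy : x ≠ y)
    (ha : (a, x) ∉ S) (hb : (b, y) ∉ S) : componentOf G S (a, x) = componentOf G S (b, y) := by
  rw [componentOf_of_notMem ha, componentOf_of_notMem hb]
  exact congrArg some (ConnectedComponent.sound (Adj.reachable ⟨hab, hxy⟩))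

variable {C C' : ((tensorProd G (⊤ : SimpleGraph (Fin n))).induce Sᶜ).ConnectedComponent}
  {v v' x : Fin n} {w z : α}

variable (G S) in
def FiberSplit (C C' : ((tensorProd G (⊤ : SimpleGraph (Fin n))).induce Sᶜ).ConnectedComponent)
    (v v' : Fin n) (w : α) : Prop :=
  componentOf G S (w, v) = some C ∧ componentOf G S (w, v') = some C'

namespace FiberSplit

theorem symm (h : FiberSplit G S C C' v v' w) : FiberSplit G S C' C v' v w := ⟨h.2, h.1⟩

theorem ne (h : FiberSplit G S C C' v v' w) (hC : C ≠ C') : v ≠ v' := by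
  rintro rfl
  exact hC (Option.some_injective _ (h.1.symm.trans h.2))

theorem componentOf_of_adj (h : FiberSplit G S C C' v v' w) (hC : C ≠ C') (hwz : G.Adj w z)
    (hz : (z, v) ∉ S) : componentOf G S (z, v) = some C' :=
  (componentOf_eq_of_adj hwz.symm (h.ne hC) hz (notMem_of_componentOf_eq_some h.2)).trans h.2

theorem mem_of_adj (h : FiberSplit G S C C' v v' w) (hC : C ≠ C') (hwz : G.Adj w z)
    (hxv : x ≠ v) (hxv' : x ≠ v') : (z, x) ∈ S := by
  by_contra hz
  have e := componentOf_eq_of_adj hwz.symm hxv hz (notMem_of_componentOf_eq_some h.1)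
  have e' := componentOf_eq_of_adj hwz.symm hxv' hz (notMem_of_componentOf_eq_some h.2)
  exact hC (Option.some_injective _ (h.1.symm.trans (e.symm.trans (e'.trans h.2))))

theorem swap_of_adj (h : FiberSplit G S C C' v v' w) (hC : C ≠ C') (hwz : G.Adj w z)
    (hz : (z, v) ∉ S) (hz' : (z, v') ∉ S) : FiberSplit G S C' C v v' z :=
  ⟨h.componentOf_of_adj hC hwz hz, h.symm.componentOf_of_adj hC.symm hwz hz'⟩

theorem not_adj (h : FiberSplit G S C C' v v' w) (h' : FiberSplit G S C C' v v' z)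
    (hC : C ≠ C') : ¬ G.Adj w z := fun hwz =>
  hC (Option.some_injective _
    (h'.1.symm.trans (h.componentOf_of_adj hC hwz (notMem_of_componentOf_eq_some h'.1))))

theorem not_adj_of_adj {p q : α} (hp : FiberSplit G S C C' v v' p)
    (hq : FiberSplit G S C' C v v' q) (hC : C ≠ C') (hz : (z, x) ∉ S) (hpz : G.Adj p z) :
    ¬ G.Adj q z := by
  intro hqz
  by_cases hxv : x = v
  · subst hxv
    exact hC (Option.some_injective _
      ((hq.componentOf_of_adj hC.symm hqz hz).symm.trans (hp.componentOf_of_adj hC hpz hz)))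
  by_cases hxv' : x = v'
  · subst hxv'
    exact hC (Option.some_injective _
      ((hp.symm.componentOf_of_adj hC.symm hpz hz).symm.trans
        (hq.symm.componentOf_of_adj hC hqz hz)))
  exact hz (hp.mem_of_adj hC hpz hxv hxv')

theorem exists_adj_notMem (h : FiberSplit G S C C' v v' w) (hC : C ≠ C')
    (hniso : ∀ p ∉ S, ∃ q ∉ S, (tensorProd G (⊤ : SimpleGraph (Fin n))).Adj p q) :
    ∃ y, G.Adj w y ∧ (y, v) ∉ S := by
  obtain ⟨⟨y, j⟩, hy, hwy, hj⟩ := hniso (w, v') (notMem_of_componentOf_eq_some h.2)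
  obtain rfl : j = v := by
    by_contra hjv
    exact hy (h.mem_of_adj hC hwy hjv (Ne.symm hj))
  exact ⟨y, hwy, hy⟩

theorem mem_self (h : FiberSplit G S C C' v v' w) (hC : C ≠ C')
    (hniso : ∀ p ∉ S, ∃ q ∉ S, (tensorProd G (⊤ : SimpleGraph (Fin n))).Adj p q)
    (hxv : x ≠ v) (hxv' : x ≠ v') : (w, x) ∈ S := by
  obtain ⟨y, hwy, hy⟩ := h.exists_adj_notMem hC hniso
  obtain ⟨y', hwy', hy'⟩ := h.symm.exists_adj_notMem hC.symm hniso
  by_contra hx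
  have e : componentOf G S (w, x) = some C' :=
    (componentOf_eq_of_adj hwy hxv hx hy).trans (h.componentOf_of_adj hC hwy hy)
  have e' : componentOf G S (w, x) = some C :=
    (componentOf_eq_of_adj hwy' hxv' hx hy').trans (h.symm.componentOf_of_adj hC.symm hwy' hy')
  exact hC (Option.some_injective _ (e'.symm.trans e))

theorem sub_two_le_ncard (h : FiberSplit G S C C' v v' w) (hC : C ≠ C')
    (hniso : ∀ p ∉ S, ∃ q ∉ S, (tensorProd G (⊤ : SimpleGraph (Fin n))).Adj p q) :
    n - 2 ≤ {x | (w, x) ∈ S}.ncard := by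
  classical
  have := card_sub_card_le_ncard_fiber (S := S) (a := w) {v, v'} fun x hx => by
    simp only [mem_insert, mem_singleton, not_or] at hx
    exact h.mem_self hC hniso hx.1 hx.2
  rwa [Fintype.card_fin, card_pair (h.ne hC)] at this

theorem sub_one_le_ncard_of_adj (h : FiberSplit G S C C' v v' w) (hC : C ≠ C') (hwz : G.Adj w z)
    (hz : ¬ FiberSplit G S C' C v v' z) : n - 1 ≤ {x | (z, x) ∈ S}.ncard := by
  classical
  obtain ⟨t, ht⟩ : ∃ t, ∀ x ≠ t, (z, x) ∈ S := by
    by_cases hzv : (z, v) ∈ S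
    · refine ⟨v', fun x hxv' => ?_⟩
      by_cases hxv : x = v
      · exact hxv ▸ hzv
      · exact h.mem_of_adj hC hwz hxv hxv'
    by_cases hzv' : (z, v') ∈ S
    · refine ⟨v, fun x hxv => ?_⟩
      by_cases hxv' : x = v'
      · exact hxv' ▸ hzv'
      · exact h.mem_of_adj hC hwz hxv hxv'
    exact (hz (h.swap_of_adj hC hwz hzv hzv')).elim
  have := card_sub_card_le_ncard_fiber (S := S) (a := z) {t} fun x hx => ht x (by simpa using hx)
  rwa [Fintype.card_fin, card_singleton] at this

end FiberSplit

end Kronecker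

theorem componentOf_eq_of_fst_eq {α : Type*} [Fintype α] {G : SimpleGraph α} [DecidableRel G.Adj]
    (hbip : ¬ G.Colorable 2) (hk : kappa G = G.minDegree) {n : ℕ} (hn : 3 ≤ n)
    {S : Set (α × Fin n)} (hcard : S.ncard = (n - 1) * G.minDegree)
    (hfiber : ∀ u : α, ∃ v : Fin n, (u, v) ∉ S)
    (hniso : ∀ p ∉ S, ∃ q ∉ S, (tensorProd G (⊤ : SimpleGraph (Fin n))).Adj p q)
    {u : α} {v v' : Fin n} (h : (u, v) ∉ S) (h' : (u, v') ∉ S) :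
    componentOf G S (u, v) = componentOf G S (u, v') := by
  classical
  obtain ⟨C, hu⟩ : ∃ C, componentOf G S (u, v) = some C := ⟨_, componentOf_of_notMem h⟩
  obtain ⟨C', hu'⟩ : ∃ C', componentOf G S (u, v') = some C' := ⟨_, componentOf_of_notMem h'⟩
  rw [hu, hu', Option.some_inj]
  by_contra hC
  set P := univ.filter (FiberSplit G S C C' v v')
  set Q := univ.filter (FiberSplit G S C' C v v')
  set N := G.outerBoundary (P ∪ Q)
  have huP : u ∈ P := mem_filter.2 ⟨mem_univ u, hu, hu'⟩
  have hPQ : Disjoint P Q := disjoint_filter.2 fun _ _ hp hq =>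
    hC (Option.some_injective _ (hp.1.symm.trans hq.1))
  have hcount : (n - 2) * #(P ∪ Q) + (n - 1) * #N ≤ (n - 1) * G.minDegree := by
    refine hcard ▸ mul_card_add_mul_card_le_ncard (disjoint_outerBoundary _)
      (fun w hw => ?_) (fun z hz => ?_)
    · rcases mem_union.1 hw with hw | hw
      · exact (mem_filter.1 hw).2.sub_two_le_ncard hC hniso
      · exact (mem_filter.1 hw).2.sub_two_le_ncard (Ne.symm hC) hniso
    · obtain ⟨-, hzW, w, hw, hwz⟩ := mem_filter.1 hz
      rcases mem_union.1 hw with hw | hw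
      · exact (mem_filter.1 hw).2.sub_one_le_ncard_of_adj hC hwz fun hz =>
          hzW (mem_union_right _ (mem_filter.2 ⟨mem_univ z, hz⟩))
      · exact (mem_filter.1 hw).2.sub_one_le_ncard_of_adj (Ne.symm hC) hwz fun hz =>
          hzW (mem_union_left _ (mem_filter.2 ⟨mem_univ z, hz⟩))
  have hdeg := minDegree_add_one_le_card_add_card_outerBoundary (G := G) (mem_union_left Q huP)
  obtain ⟨hNδ, hWN⟩ : #N < G.minDegree ∧ #(P ∪ Q) + 2 * #N ≤ 2 * G.minDegree := by
    obtain ⟨t, rfl⟩ := Nat.exists_eq_add_of_le hn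
    simp only [show 3 + t - 2 = t + 1 by omega, show 3 + t - 1 = t + 2 by omega] at hcount
    constructor <;> nlinarith
  have hconn := connected_induce_compl_of_ncard_lt_kappa (G := G) (N := (N : Set α))
    (by rwa [Set.ncard_coe_finset, hk])
  refine hbip (colorable_two_of_cover (fun x => ?_) hPQ ?_ ?_ ?_ huP hNδ
    (by rwa [card_union_of_disjoint hPQ] at hWN))
  · simpa only [mem_union, or_assoc] using mem_or_mem_outerBoundary (mem_union_left Q huP) hconn x
  · exact fun a ha b hb _ => (mem_filter.1 ha).2.not_adj (mem_filter.1 hb).2 hC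
  · exact fun a ha b hb _ => (mem_filter.1 ha).2.not_adj (mem_filter.1 hb).2 (Ne.symm hC)
  · intro z _ p hp q hq hzp
    obtain ⟨x, hx⟩ := hfiber z
    exact (mem_filter.1 hp).2.not_adj_of_adj (mem_filter.1 hq).2 hC hx hzp.symm ∘ Adj.symm

theorem stmt17_general {α : Type*} [Fintype α] (G : SimpleGraph α) [DecidableRel G.Adj]
    (hbip : ¬ G.Colorable 2)
    (hk : kappa G = G.minDegree)
    (n : ℕ) (hn : 3 ≤ n) (S : Set (α × Fin n))
    (hcard : S.ncard = (n - 1) * G.minDegree)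
    (hfiber : ∀ u : α, ∃ v : Fin n, (u, v) ∉ S)
    (hniso : ∀ x ∉ S, ∃ y ∉ S, (tensorProd G (⊤ : SimpleGraph (Fin n))).Adj x y) :
    ∀ u : α, ∃ C : ((tensorProd G (⊤ : SimpleGraph (Fin n))).induce Sᶜ).ConnectedComponent,
      ∀ x : ↥(Sᶜ), (x : α × Fin n).1 = u →
        ((tensorProd G (⊤ : SimpleGraph (Fin n))).induce Sᶜ).connectedComponentMk x = C := by
  intro u
  obtain ⟨v, hv⟩ := hfiber u
  refine ⟨connectedComponentMk _ ⟨(u, v), hv⟩, ?_⟩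
  rintro ⟨⟨a, x⟩, hx⟩ (rfl : a = u)
  have := componentOf_eq_of_fst_eq hbip hk hn hcard hfiber hniso hx hv
  rwa [componentOf_of_notMem hx, componentOf_of_notMem hv, Option.some_inj] at this

theorem stmt17 {α : Type*} [Fintype α] [Nonempty α] (G : SimpleGraph α) [DecidableRel G.Adj]
    (hconn : G.Connected) (hbip : ¬ G.Colorable 2)
    (hk : kappa G = G.minDegree) (hd : 1 ≤ G.minDegree)
    (n : ℕ) (hn : 3 ≤ n) (S : Set (α × Fin n))
    (hcard : S.ncard = (n - 1) * G.minDegree)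
    (hfiber : ∀ u : α, ∃ v : Fin n, (u, v) ∉ S)
    (hniso : ∀ x ∉ S, ∃ y ∉ S, (tensorProd G (⊤ : SimpleGraph (Fin n))).Adj x y) :
    ∀ u : α, ∃ C : ((tensorProd G (⊤ : SimpleGraph (Fin n))).induce Sᶜ).ConnectedComponent,
      ∀ x : ↥(Sᶜ), (x : α × Fin n).1 = u →
        ((tensorProd G (⊤ : SimpleGraph (Fin n))).induce Sᶜ).connectedComponentMk x = C :=
  stmt17_general G hbip hk n hn S hcard hfiber hniso
end
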